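/- The map σ : (ℝ³∖{0}) × ℝ → (ℝ³∖{0}) × ℝ³, given by (q, α) ↦ (q, α·q), is a homeomorphism onto the constraint surface S = {(q,p) ∈ (ℝ³∖{0}) × ℝ³ : q × p = 0} (equipped with the subspace topology). In particular S is a trivial real line bundle over ℝ³∖{0}, and hence a smooth 4-dimensional manifold. -/
import Mathlib

private def dot3 (a b : Fin 3 → ℝ) : ℝ := a 0 * b 0 + a 1 * b 1 + a 2 * b 2

private lemma dot3_pos {q : Fin 3 → ℝ} (hq : q ≠ 0) : 0 < dot3 q q := by
  rcases Function.ne_iff.mp hq with ⟨i, hi⟩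
  have h : dot3 q q = q 0 ^ 2 + q 1 ^ 2 + q 2 ^ 2 := by simp [dot3]; ring
  rw [h]
  fin_cases i <;> simp at hi <;> positivity

private lemma cross_zero_scale {q p : Fin 3 → ℝ} (hq : q ≠ 0)
    (h : crossProduct q p = 0) : (dot3 q p / dot3 q q) • q = p := by
  have h0 := congrFun h 0
  have h1 := congrFun h 1
  have h2 := congrFun h 2
  simp [crossProduct] at h0 h1 h2
  have hne : dot3 q q ≠ 0 := (dot3_pos hq).ne'
  funext i
  have key : ∀ j : Fin 3, (dot3 q p / dot3 q q) * q j = p j := by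
    intro j
    rw [div_mul_eq_mul_div, div_eq_iff hne]
    fin_cases j
    · simp only [Fin.zero_eta, dot3]; linear_combination q 1 * h2 - q 2 * h1
    · simp only [Fin.mk_one, dot3]; linear_combination q 2 * h0 - q 0 * h2
    · simp only [Fin.reduceFinMk, dot3]; linear_combination q 0 * h1 - q 1 * h0
  exact key i

private lemma cont_dot3 {X : Type*} [TopologicalSpace X] {f g : X → Fin 3 → ℝ}
    (hf : Continuous f) (hg : Continuous g) :
    Continuous fun x => dot3 (f x) (g x) := by
  unfold dot3; fun_prop

/-- The map `σ : (ℝ³∖{0}) × ℝ → (ℝ³∖{0}) × ℝ³`, `(q, α) ↦ (q, α·q)`, is a homeomorphism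
onto the constraint surface `S = {(q,p) : q ≠ 0, q × p = 0}` with the subspace topology;
in particular `S` is a trivial real line bundle over `ℝ³∖{0}`. -/
theorem stmt_7 :
    ∃ h : ({q : Fin 3 → ℝ // q ≠ 0} × ℝ) ≃ₜ
        {x : (Fin 3 → ℝ) × (Fin 3 → ℝ) | x.1 ≠ 0 ∧ crossProduct x.1 x.2 = 0},
      ∀ z : {q : Fin 3 → ℝ // q ≠ 0} × ℝ,
        (h z : (Fin 3 → ℝ) × (Fin 3 → ℝ)) = ((z.1 : Fin 3 → ℝ), z.2 • (z.1 : Fin 3 → ℝ)) := by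
  refine ⟨{
    toFun := fun z => ⟨((z.1 : Fin 3 → ℝ), z.2 • (z.1 : Fin 3 → ℝ)),
      z.1.2, by simp [map_smul, cross_self]⟩
    invFun := fun x => (⟨x.1.1, x.2.1⟩, dot3 x.1.1 x.1.2 / dot3 x.1.1 x.1.1)
    left_inv := ?_
    right_inv := ?_
    continuous_toFun := ?_
    continuous_invFun := ?_ }, fun z => rfl⟩
  · rintro ⟨⟨q, hq⟩, α⟩
    have hne : dot3 q q ≠ 0 := (dot3_pos hq).ne'
    have : dot3 q (α • q) = α * dot3 q q := by simp [dot3]; ring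
    simp only [this]
    rw [mul_div_assoc, div_self hne, mul_one]
  · rintro ⟨⟨q, p⟩, hq, hc⟩
    exact Subtype.ext (Prod.ext rfl (cross_zero_scale hq hc))
  · exact (Continuous.subtype_mk (by fun_prop) _)
  · refine Continuous.prodMk (Continuous.subtype_mk (by fun_prop) _) ?_
    refine Continuous.div (cont_dot3 (by fun_prop) (by fun_prop))
      (cont_dot3 (by fun_prop) (by fun_prop)) ?_
    exact fun x => (dot3_pos x.2.1).ne'
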